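/- If E is a horizontal self-affine carpet, then every nonempty vertical slice of E, regarded as a metric subspace of ℝ, is uniformly perfect with constant δ^{−1}·α̲^{−(k+1)}, where k is the smallest nonnegative integer with ᾱ^k < δ. -/

import Mathlib

open Set Metric Filter Topology

noncomputable section

/-- The Euclidean plane ℝ². -/
abbrev E2 := EuclideanSpace ℝ (Fin 2)

/-- The vertical line {a} × ℝ in ℝ². -/
def vline (a : ℝ) : Set E2 := {x | x 0 = a}

/-- A horizontal self-affine carpet: an IFS of invertible diagonal affine maps on ℝ²
satisfying (H1), together with its attractor `E` of diameter 1, satisfying the strong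
separation condition and the vertical line condition (H2). -/
structure HorizontalCarpet where
  N : ℕ
  hN : 2 ≤ N
  a1 : Fin N → ℝ
  a2 : Fin N → ℝ
  b1 : Fin N → ℝ
  b2 : Fin N → ℝ
  φ : Fin N → E2 → E2
  hφ : ∀ i x, φ i x = ![a1 i * x 0 + b1 i, a2 i * x 1 + b2 i]
  hH1 : ∀ i, 0 < a2 i ∧ a2 i < a1 i ∧ a1 i < 1
  E : Set E2
  hne : E.Nonempty
  hcomp : IsCompact E
  hinv : E = ⋃ i, φ i '' E
  hdiam : Metric.diam E = 1
  hssc : ∀ i j, i ≠ j → Disjoint (φ i '' E) (φ j '' E)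
  hH2 : ∀ a : ℝ, (vline a ∩ convexHull ℝ E).Nonempty →
    ∃ i j : Fin N, i ≠ j ∧ (vline a ∩ φ i '' (convexHull ℝ E)).Nonempty ∧
      (vline a ∩ φ j '' (convexHull ℝ E)).Nonempty

/-- `η : [0,∞) → [0,∞)` is a homeomorphism (expressed for a function `η : ℝ → ℝ`). -/
def IsHomeoOfIci (η : ℝ → ℝ) : Prop :=
  ∃ e : (Set.Ici (0:ℝ)) ≃ₜ (Set.Ici (0:ℝ)), ∀ x : Set.Ici (0:ℝ), (e x : ℝ) = η x

/-- `f` is η-quasisymmetric. -/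
def IsQuasisymmetric {X Y : Type*} [MetricSpace X] [MetricSpace Y] (η : ℝ → ℝ)
    (f : X → Y) : Prop :=
  ∀ x y z : X, x ≠ z →
    dist (f x) (f y) / dist (f x) (f z) ≤ η (dist x y / dist x z)

/-- `ᾱ = max_i α₁(i)`. -/
def alphaBar (c : HorizontalCarpet) : ℝ := sSup (Set.range c.a1)

/-- `α̲ = min_i α₂(i)`. -/
def alphaLow (c : HorizontalCarpet) : ℝ := sInf (Set.range c.a2)

/-- `δ = min_{i ≠ j} dist(φ_i(E), φ_j(E))`. -/
def sscGap (c : HorizontalCarpet) : ℝ :=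
  sInf {d : ℝ | ∃ i j : Fin c.N, i ≠ j ∧
    ∃ x ∈ c.φ i '' c.E, ∃ y ∈ c.φ j '' c.E, d = dist x y}

/-- The vertical slice `V_{y₁}(E) = {x₂ : (y₁,x₂) ∈ E}`. -/
def vslice (E : Set E2) (y1 : ℝ) : Set ℝ := {x2 : ℝ | (!₂[y1, x2] : E2) ∈ E}

/-- A subset of ℝ is uniformly perfect with constant `D` as a metric subspace of ℝ. -/
def UnifPerfectOn (A : Set ℝ) (D : ℝ) : Prop :=
  ∀ x ∈ A, ∀ r : ℝ, 0 < r → (A \ closedBall x r).Nonempty →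
    ((A ∩ closedBall x r) \ closedBall x (r / D)).Nonempty

/-- The smallest `k ∈ ℕ` with `ᾱ^k < δ`. -/
def kGap (c : HorizontalCarpet) : ℕ := sInf {k : ℕ | alphaBar c ^ k < sscGap c}


/-!
Write `π x = x 0` for the horizontal coordinate. By (H2) every point of `π (conv E)` is the image of
a point of `π (conv E)` under one of the contractions `t ↦ α₁(i) t + b₁(i)`, which also preserve
the closed set `π E`; iterating, `π (conv E) ⊆ π E`, i.e. every vertical line through `conv E`
meets `E`. Applying this inside a cylinder `φ_j(conv E)` given by (H2) at a point `x ∈ φ_i(E)`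
produces a point of `φ_j(E)`, `j ≠ i`, on the vertical line through `x`, at vertical distance
between `δ` and `1` from `x`. The maps `φ_i` multiply vertical distances by `α₂(i) ≥ α̲`, so
rescaling this point yields, for every `r < 1`, a point of the slice at distance in
`(α̲ δ r, r]` from `x`; finally `α̲ δ ≥ α̲^(k+1) δ`.
-/

theorem IsClosed.subset_of_contracting_cover {X ι : Type*} [PseudoMetricSpace X] {S I : Set X}
    (hS : IsClosed S) {f : ι → X → X} {ρ C : ℝ} (hρ₀ : 0 ≤ ρ) (hρ₁ : ρ < 1)
    (hf : ∀ i x y, dist (f i x) (f i y) ≤ ρ * dist x y) (hfS : ∀ i, MapsTo (f i) S S)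
    (hI : ∀ y ∈ I, ∃ i, ∃ y' ∈ I, f i y' = y) (hC : ∀ y ∈ I, ∃ s ∈ S, dist y s ≤ C) :
    I ⊆ S := by
  have approx : ∀ n : ℕ, ∀ y ∈ I, ∃ s ∈ S, dist y s ≤ C * ρ ^ n := by
    intro n
    induction n with
    | zero => simpa using hC
    | succ n ih =>
      intro y hy
      obtain ⟨i, y', hy', rfl⟩ := hI y hy
      obtain ⟨s, hs, hys⟩ := ih y' hy'
      refine ⟨f i s, hfS i hs, ?_⟩
      calc dist (f i y') (f i s) ≤ ρ * dist y' s := hf i y' s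
        _ ≤ ρ * (C * ρ ^ n) := by gcongr
        _ = C * ρ ^ (n + 1) := by ring
  intro y hy
  rw [← hS.closure_eq, Metric.mem_closure_iff]
  intro ε hε
  have hlim : Tendsto (fun n => C * ρ ^ n) atTop (𝓝 0) := by
    simpa using (tendsto_pow_atTop_nhds_zero_of_lt_one hρ₀ hρ₁).const_mul C
  obtain ⟨n, hn⟩ := (hlim.eventually (gt_mem_nhds hε)).exists
  obtain ⟨s, hs, hys⟩ := approx n y hy
  exact ⟨s, hs, hys.trans_lt hn⟩

theorem EuclideanSpace.dist_eq_abs_sub_apply_one {u v : EuclideanSpace ℝ (Fin 2)}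
    (h : u 0 = v 0) : dist u v = |u 1 - v 1| := by
  simp [EuclideanSpace.dist_eq, Fin.sum_univ_two, h, Real.dist_eq, Real.sqrt_sq_eq_abs]

namespace HorizontalCarpet

variable (c : HorizontalCarpet)

instance : NeZero c.N := ⟨by have := c.hN; omega⟩

theorem phi_apply_zero (i : Fin c.N) (x : E2) : c.φ i x 0 = c.a1 i * x 0 + c.b1 i := by
  simp [c.hφ]

theorem phi_apply_one (i : Fin c.N) (x : E2) : c.φ i x 1 = c.a2 i * x 1 + c.b2 i := by
  simp [c.hφ]

theorem abs_phi_apply_one_sub (i : Fin c.N) (x y : E2) :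
    |c.φ i x 1 - c.φ i y 1| = c.a2 i * |x 1 - y 1| := by
  rw [phi_apply_one, phi_apply_one, show c.a2 i * x 1 + c.b2 i - (c.a2 i * y 1 + c.b2 i)
    = c.a2 i * (x 1 - y 1) by ring, abs_mul, abs_of_pos (c.hH1 i).1]

theorem mapsTo_phi (i : Fin c.N) : MapsTo (c.φ i) c.E c.E := fun x hx => by
  rw [c.hinv]
  exact mem_iUnion.2 ⟨i, mem_image_of_mem _ hx⟩

theorem exists_phi_eq {x : E2} (hx : x ∈ c.E) : ∃ i, ∃ x' ∈ c.E, c.φ i x' = x := by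
  rw [c.hinv] at hx
  simpa using hx

theorem dist_le_one {x y : E2} (hx : x ∈ c.E) (hy : y ∈ c.E) : dist x y ≤ 1 :=
  c.hdiam ▸ dist_le_diam_of_mem c.hcomp.isBounded hx hy

theorem a1_pos (i : Fin c.N) : 0 < c.a1 i := (c.hH1 i).1.trans (c.hH1 i).2.1

theorem a1_le_alphaBar (i : Fin c.N) : c.a1 i ≤ alphaBar c :=
  le_csSup (finite_range c.a1).bddAbove ⟨i, rfl⟩

theorem a2_le_alphaBar (i : Fin c.N) : c.a2 i ≤ alphaBar c :=
  (c.hH1 i).2.1.le.trans (c.a1_le_alphaBar i)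

theorem alphaBar_nonneg : 0 ≤ alphaBar c :=
  Real.sSup_nonneg (forall_mem_range.2 fun i => (c.a1_pos i).le)

theorem alphaBar_lt_one : alphaBar c < 1 := by
  obtain ⟨i, hi⟩ := (range_nonempty c.a1).csSup_mem (finite_range c.a1)
  rw [alphaBar, ← hi]
  exact (c.hH1 i).2.2

theorem alphaLow_nonneg : 0 ≤ alphaLow c :=
  Real.sInf_nonneg (forall_mem_range.2 fun i => (c.hH1 i).1.le)

theorem alphaLow_le (i : Fin c.N) : alphaLow c ≤ c.a2 i :=
  csInf_le (finite_range c.a2).bddBelow ⟨i, rfl⟩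

theorem alphaLow_le_one : alphaLow c ≤ 1 :=
  (c.alphaLow_le 0).trans ((c.hH1 0).2.1.trans (c.hH1 0).2.2).le

theorem sscGap_nonneg : 0 ≤ sscGap c :=
  Real.sInf_nonneg <| by rintro _ ⟨-, -, -, x, -, y, -, rfl⟩; exact dist_nonneg

theorem sscGap_le_dist {i j : Fin c.N} (hij : i ≠ j) {x y : E2} (hx : x ∈ c.φ i '' c.E)
    (hy : y ∈ c.φ j '' c.E) : sscGap c ≤ dist x y :=
  csInf_le ⟨0, by rintro _ ⟨-, -, -, x, -, y, -, rfl⟩; exact dist_nonneg⟩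
    ⟨i, j, hij, x, hx, y, hy, rfl⟩

theorem exists_mem_apply_zero_eq_of_mem_convexHull {y : E2} (hy : y ∈ convexHull ℝ c.E) :
    ∃ e ∈ c.E, e 0 = y 0 := by
  have hS : IsClosed ((fun e : E2 => e 0) '' c.E) := (c.hcomp.image (by fun_prop)).isClosed
  refine hS.subset_of_contracting_cover (f := fun i t => c.a1 i * t + c.b1 i) (C := 1)
    c.alphaBar_nonneg c.alphaBar_lt_one ?_ ?_ ?_ ?_ (mem_image_of_mem (fun e : E2 => e 0) hy)
  · intro i t s
    rw [Real.dist_eq, Real.dist_eq, show c.a1 i * t + c.b1 i - (c.a1 i * s + c.b1 i)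
      = c.a1 i * (t - s) by ring, abs_mul, abs_of_pos (c.a1_pos i)]
    gcongr
    exact c.a1_le_alphaBar i
  · rintro i _ ⟨e, he, rfl⟩
    exact ⟨c.φ i e, c.mapsTo_phi i he, c.phi_apply_zero i e⟩
  · rintro _ ⟨y, hy, rfl⟩
    obtain ⟨i, -, -, ⟨z, hz, y', hy', rfl⟩, -⟩ := c.hH2 (y 0) ⟨y, rfl, hy⟩
    exact ⟨i, y' 0, mem_image_of_mem _ hy', (c.phi_apply_zero i y').symm.trans hz⟩
  · rintro _ ⟨y, hy, rfl⟩
    obtain ⟨e, he⟩ := c.hne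
    refine ⟨e 0, mem_image_of_mem _ he, ?_⟩
    calc dist (y 0) (e 0) ≤ dist y e := PiLp.dist_apply_le y e 0
      _ ≤ diam (convexHull ℝ c.E) := dist_le_diam_of_mem
          (isBounded_convexHull.2 c.hcomp.isBounded) hy (subset_convexHull ℝ _ he)
      _ = 1 := by rw [convexHull_diam, c.hdiam]

theorem exists_mem_vertical_gap {x : E2} (hx : x ∈ c.E) :
    ∃ u ∈ c.E, u 0 = x 0 ∧ 0 < |u 1 - x 1| ∧ sscGap c ≤ |u 1 - x 1| := by
  obtain ⟨i, x', hx', rfl⟩ := c.exists_phi_eq hx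
  obtain ⟨j, hji, z, hz, y, hy, rfl⟩ :
      ∃ j ≠ i, ∃ z ∈ vline (c.φ i x' 0), z ∈ c.φ j '' convexHull ℝ c.E := by
    obtain ⟨j₁, j₂, hj, h₁, h₂⟩ := c.hH2 _ ⟨_, rfl, subset_convexHull ℝ _ hx⟩
    by_cases h : j₁ = i
    · exact ⟨j₂, (h ▸ hj).symm, h₂⟩
    · exact ⟨j₁, h, h₁⟩
  obtain ⟨e, he, he0⟩ := c.exists_mem_apply_zero_eq_of_mem_convexHull hy
  have hu0 : c.φ j e 0 = c.φ i x' 0 := by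
    rw [phi_apply_zero, he0, ← phi_apply_zero]
    exact hz
  have hne : c.φ j e ≠ c.φ i x' := fun h =>
    disjoint_left.1 (c.hssc j i hji) (mem_image_of_mem _ he) (h ▸ mem_image_of_mem _ hx')
  have hdist := EuclideanSpace.dist_eq_abs_sub_apply_one hu0
  exact ⟨c.φ j e, c.mapsTo_phi j he, hu0, hdist ▸ dist_pos.2 hne,
    hdist ▸ c.sscGap_le_dist hji (mem_image_of_mem _ he) (mem_image_of_mem _ hx')⟩

theorem exists_mem_vertical_dist_mem_Ioc {x : E2} (hx : x ∈ c.E) {r : ℝ} (hr₀ : 0 < r)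
    (hr₁ : r < 1) :
    ∃ z ∈ c.E, z 0 = x 0 ∧ r * alphaLow c * sscGap c < |z 1 - x 1| ∧ |z 1 - x 1| ≤ r := by
  obtain ⟨n, hn⟩ := exists_pow_lt_of_lt_one hr₀ c.alphaBar_lt_one
  induction n generalizing x r with
  | zero => exact absurd hr₁ (by simpa using hn.le)
  | succ n ih =>
    obtain ⟨i, x', hx', rfl⟩ := c.exists_phi_eq hx
    have ha₀ : 0 < c.a2 i := (c.hH1 i).1
    suffices ∃ z ∈ c.E, z 0 = x' 0 ∧ r * alphaLow c * sscGap c < c.a2 i * |z 1 - x' 1| ∧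
        c.a2 i * |z 1 - x' 1| ≤ r by
      obtain ⟨z, hz, hz0, hlow, hup⟩ := this
      refine ⟨c.φ i z, c.mapsTo_phi i hz, by simp only [phi_apply_zero, hz0], ?_⟩
      rw [abs_phi_apply_one_sub]
      exact ⟨hlow, hup⟩
    rcases le_or_gt (c.a2 i) r with hir | hir
    · obtain ⟨u, hu, hu0, hpos, hgap⟩ := c.exists_mem_vertical_gap hx'
      have hle : |u 1 - x' 1| ≤ 1 := by
        simpa [EuclideanSpace.dist_eq_abs_sub_apply_one hu0] using c.dist_le_one hu hx'
      have hrα : r * alphaLow c < c.a2 i := by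
        nlinarith [c.alphaLow_le i, c.alphaLow_nonneg]
      refine ⟨u, hu, hu0, ?_, ?_⟩
      · calc r * alphaLow c * sscGap c ≤ r * alphaLow c * |u 1 - x' 1| := by
              gcongr
              exact mul_nonneg hr₀.le c.alphaLow_nonneg
          _ < c.a2 i * |u 1 - x' 1| := by gcongr
      · nlinarith
    · have hn' : alphaBar c ^ n < r / c.a2 i := by
        rw [lt_div_iff₀ ha₀]
        calc alphaBar c ^ n * c.a2 i ≤ alphaBar c ^ n * alphaBar c := by
              gcongr
              · exact pow_nonneg c.alphaBar_nonneg n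
              · exact c.a2_le_alphaBar i
          _ < r := by rwa [← pow_succ]
      obtain ⟨z, hz, hz0, hlow, hup⟩ :=
        ih hx' (div_pos hr₀ ha₀) ((div_lt_one ha₀).2 hir) hn'
      refine ⟨z, hz, hz0, ?_, ?_⟩
      · calc r * alphaLow c * sscGap c = c.a2 i * (r / c.a2 i * alphaLow c * sscGap c) := by
              field_simp
          _ < c.a2 i * |z 1 - x' 1| := by gcongr
      · calc c.a2 i * |z 1 - x' 1| ≤ c.a2 i * (r / c.a2 i) := by gcongr
          _ = r := by field_simp

theorem div_le_mul_alphaLow_mul_sscGap {r : ℝ} (hr : 0 ≤ r) (k : ℕ) :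
    r / ((sscGap c)⁻¹ * ((alphaLow c)⁻¹) ^ (k + 1)) ≤ r * alphaLow c * sscGap c :=
  calc r / ((sscGap c)⁻¹ * ((alphaLow c)⁻¹) ^ (k + 1)) = r * sscGap c * alphaLow c ^ (k + 1) := by
        rw [div_eq_mul_inv, mul_inv, inv_inv, inv_pow, inv_inv, mul_assoc]
    _ ≤ r * sscGap c * alphaLow c := by
        gcongr
        · exact mul_nonneg hr c.sscGap_nonneg
        · exact pow_le_of_le_one c.alphaLow_nonneg c.alphaLow_le_one k.succ_ne_zero
    _ = r * alphaLow c * sscGap c := by ring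

end HorizontalCarpet

theorem statement12_general (c : HorizontalCarpet) (y1 : ℝ) :
    UnifPerfectOn (vslice c.E y1) ((sscGap c)⁻¹ * ((alphaLow c)⁻¹) ^ (kGap c + 1)) := by
  rintro x2 hx2 r hr ⟨t, ht, htr⟩
  have hr₁ : r < 1 := by
    have h := c.dist_le_one (x := !₂[y1, t]) (y := !₂[y1, x2]) ht hx2
    rw [EuclideanSpace.dist_eq_abs_sub_apply_one (by simp)] at h
    simp only [Matrix.cons_val_one, Matrix.cons_val_fin_one, mem_closedBall, Real.dist_eq,
      not_le] at h htr
    linarith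
  obtain ⟨z, hz, hz0, hlow, hup⟩ :=
    c.exists_mem_vertical_dist_mem_Ioc (x := !₂[y1, x2]) hx2 hr hr₁
  have hz_eq : !₂[y1, z 1] = z := by
    ext i
    fin_cases i <;> simp_all
  simp only [Matrix.cons_val_one, Matrix.cons_val_zero] at hlow hup
  refine ⟨z 1, ⟨show !₂[y1, z 1] ∈ c.E from hz_eq ▸ hz, ?_⟩, ?_⟩
  · rwa [mem_closedBall, Real.dist_eq]
  · rw [mem_closedBall, Real.dist_eq, not_le]
    exact (c.div_le_mul_alphaLow_mul_sscGap hr.le _).trans_lt hlow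

/-- Lemma 5.4 (uniform perfectness part): every nonempty vertical slice of a horizontal
self-affine carpet is uniformly perfect with constant `δ⁻¹ α̲^{-(k+1)}`, where `k` is
the smallest nonnegative integer with `ᾱ^k < δ`. -/
theorem statement12 (c : HorizontalCarpet) (y1 : ℝ) (h : (vslice c.E y1).Nonempty) :
    UnifPerfectOn (vslice c.E y1) ((sscGap c)⁻¹ * ((alphaLow c)⁻¹) ^ (kGap c + 1)) :=
  statement12_general c y1
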